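/- arXiv:hep-th/9705018 — 4 statements merged into one kernel-verified Lean document; each statement's English description precedes it below -/
import Mathlib

section
/- In a braided monoidal category C, if X is transparent and Y is a retract of X, i.e. there exist morphisms i : Y ⟶ X and r : X ⟶ Y with i ≫ r = 𝟙_Y, then Y is transparent. (This is the closure of the degenerate sectors under subobjects, part of Lemma 3.4 of the paper; it follows from naturality of the monodromy in its first argument.) -/
open CategoryTheory MonoidalCategory

/-- An object `X` of a braided monoidal category is *transparent* if its monodromy
with every object `Y` is trivial. -/
def IsTransparent {C : Type*} [Category C] [MonoidalCategory C] [BraidedCategory C]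
    (X : C) : Prop :=
  ∀ Y : C, (β_ X Y).hom ≫ (β_ Y X).hom = 𝟙 (X ⊗ Y)

theorem transparent_of_retract {C : Type*} [Category C] [MonoidalCategory C]
    [BraidedCategory C] (X Y : C) (h : IsTransparent X)
    (i : Y ⟶ X) (r : X ⟶ Y) (hir : i ≫ r = 𝟙 Y) :
    IsTransparent Y := by
  intro Z
  have key : ((β_ Y Z).hom ≫ (β_ Z Y).hom) ≫ (i ▷ Z) = i ▷ Z := by
    rw [Category.assoc, ← BraidedCategory.braiding_naturality_right,
      ← Category.assoc, ← BraidedCategory.braiding_naturality_left,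
      Category.assoc, h Z, Category.comp_id]
  calc (β_ Y Z).hom ≫ (β_ Z Y).hom
      = ((β_ Y Z).hom ≫ (β_ Z Y).hom) ≫ (i ▷ Z) ≫ (r ▷ Z) := by
        rw [← comp_whiskerRight, hir, MonoidalCategory.id_whiskerRight,
          Category.comp_id]
    _ = (i ▷ Z) ≫ (r ▷ Z) := by rw [← Category.assoc, key]
    _ = 𝟙 (Y ⊗ Z) := by
        rw [← comp_whiskerRight, hir, MonoidalCategory.id_whiskerRight]
end

section
/- Let C be a braided monoidal category that is preadditive, has binary biproducts, and in which the tensor product is additive in each variable (monoidal preadditive). Then for objects X and Y, the biproduct X ⊞ Y is transparent if and only if both X and Y are transparent. (This is Lemma 3.3 of the paper: a reducible DHR representation is degenerate iff all its subrepresentations are degenerate.) -/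
open CategoryTheory MonoidalCategory CategoryTheory.Limits

private lemma monodromy_natural_left {C : Type*} [Category C] [MonoidalCategory C]
    [BraidedCategory C] {X X' : C} (f : X ⟶ X') (Z : C) :
    (f ▷ Z) ≫ ((β_ X' Z).hom ≫ (β_ Z X').hom)
      = ((β_ X Z).hom ≫ (β_ Z X).hom) ≫ (f ▷ Z) := by
  rw [← Category.assoc, BraidedCategory.braiding_naturality_left, Category.assoc,
    BraidedCategory.braiding_naturality_right, Category.assoc]

theorem biprod_transparent_iff {C : Type*} [Category C] [MonoidalCategory C]
    [BraidedCategory C] [Preadditive C] [HasBinaryBiproducts C] [MonoidalPreadditive C]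
    (X Y : C) :
    IsTransparent (X ⊞ Y) ↔ IsTransparent X ∧ IsTransparent Y := by
  constructor
  · intro h
    constructor
    · intro Z
      have := monodromy_natural_left (biprod.inl : X ⟶ X ⊞ Y) Z
      rw [h Z, Category.comp_id] at this
      have e : ((β_ X Z).hom ≫ (β_ Z X).hom) ≫ ((biprod.inl : X ⟶ X ⊞ Y) ▷ Z)
            ≫ ((biprod.fst : X ⊞ Y ⟶ X) ▷ Z)
          = ((biprod.inl : X ⟶ X ⊞ Y) ▷ Z) ≫ ((biprod.fst : X ⊞ Y ⟶ X) ▷ Z) := by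
        rw [← Category.assoc, ← this]
      simpa [← comp_whiskerRight] using e
    · intro Z
      have := monodromy_natural_left (biprod.inr : Y ⟶ X ⊞ Y) Z
      rw [h Z, Category.comp_id] at this
      have e : ((β_ Y Z).hom ≫ (β_ Z Y).hom) ≫ ((biprod.inr : Y ⟶ X ⊞ Y) ▷ Z)
            ≫ ((biprod.snd : X ⊞ Y ⟶ Y) ▷ Z)
          = ((biprod.inr : Y ⟶ X ⊞ Y) ▷ Z) ≫ ((biprod.snd : X ⊞ Y ⟶ Y) ▷ Z) := by
        rw [← Category.assoc, ← this]
      simpa [← comp_whiskerRight] using e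
  · rintro ⟨hX, hY⟩ Z
    have hL := monodromy_natural_left (biprod.inl : X ⟶ X ⊞ Y) Z
    have hR := monodromy_natural_left (biprod.inr : Y ⟶ X ⊞ Y) Z
    rw [hX Z, Category.id_comp] at hL
    rw [hY Z, Category.id_comp] at hR
    have total : ((biprod.fst : X ⊞ Y ⟶ X) ▷ Z) ≫ ((biprod.inl : X ⟶ X ⊞ Y) ▷ Z)
        + ((biprod.snd : X ⊞ Y ⟶ Y) ▷ Z) ≫ ((biprod.inr : Y ⟶ X ⊞ Y) ▷ Z) = 𝟙 ((X ⊞ Y) ⊗ Z) := by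
      rw [← comp_whiskerRight, ← comp_whiskerRight, ← MonoidalPreadditive.add_whiskerRight,
        biprod.total, id_whiskerRight]
    calc (β_ (X ⊞ Y) Z).hom ≫ (β_ Z (X ⊞ Y)).hom
        = (((biprod.fst : X ⊞ Y ⟶ X) ▷ Z) ≫ ((biprod.inl : X ⟶ X ⊞ Y) ▷ Z)
            + ((biprod.snd : X ⊞ Y ⟶ Y) ▷ Z) ≫ ((biprod.inr : Y ⟶ X ⊞ Y) ▷ Z))
            ≫ ((β_ (X ⊞ Y) Z).hom ≫ (β_ Z (X ⊞ Y)).hom) := by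
          rw [total, Category.id_comp]
      _ = 𝟙 ((X ⊞ Y) ⊗ Z) := by
          rw [Preadditive.add_comp, Category.assoc, Category.assoc, hL, hR]
          exact total
end

section
/- Let H be a complex Hilbert space, V a unitary operator on H with V² = 1, and Z := (1 + i)⁻¹ • (1 + i • V). Let F and G be bounded operators on H with even/odd parts F₊ := (F + VFV)/2, F₋ := (F − VFV)/2, and similarly G₊, G₋. If F₊G₊ = G₊F₊, F₊G₋ = G₋F₊, F₋G₊ = G₊F₋, and F₋G₋ = −G₋F₋ (graded local commutativity), then F commutes with Z G Z*. (This is the claim in the Introduction of the paper that the Bose–Fermi commutation relations are equivalent to commutation with the twisted operator Gᵗ = Z G Z*.) -/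
open Complex

/-- Graded local commutativity of `F` and `G` (their even and odd parts commute, except
that the two odd parts anticommute) is equivalent to `F` commuting with the twisted
operator `Gᵗ = Z G Z*`, where `Z = (1 + iV)/(1 + i)` and `V` is the self-adjoint unitary
grading operator. -/
theorem graded_commutativity_twist {H : Type*} [NormedAddCommGroup H]
    [InnerProductSpace ℂ H] [CompleteSpace H]
    (V Z : H →L[ℂ] H) (hV : V ∈ unitary (H →L[ℂ] H)) (hV2 : V * V = 1)
    (hZ : Z = (1 + Complex.I)⁻¹ • (1 + Complex.I • V))
    (F G : H →L[ℂ] H)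
    (Fp Fm Gp Gm : H →L[ℂ] H)
    (hFp : Fp = (2 : ℂ)⁻¹ • (F + V * F * V)) (hFm : Fm = (2 : ℂ)⁻¹ • (F - V * F * V))
    (hGp : Gp = (2 : ℂ)⁻¹ • (G + V * G * V)) (hGm : Gm = (2 : ℂ)⁻¹ • (G - V * G * V))
    (hpp : Fp * Gp = Gp * Fp) (hpm : Fp * Gm = Gm * Fp)
    (hmp : Fm * Gp = Gp * Fm) (hmm : Fm * Gm = -(Gm * Fm)) :
    F * (Z * G * star Z) = (Z * G * star Z) * F := by
  have hVsa : star V = V := by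
    calc star V = star V * (V * V) := by rw [hV2, mul_one]
    _ = (star V * V) * V := by rw [mul_assoc]
    _ = V := by rw [hV.1, one_mul]
  have hVV : ∀ X : H →L[ℂ] H, V * (V * X) = X := fun X => by
    rw [← mul_assoc, hV2, one_mul]
  have hZst : star Z = (1 - Complex.I)⁻¹ • (1 - Complex.I • V) := by
    rw [hZ]
    simp [star_smul, star_add, star_one, hVsa, Complex.star_def, map_inv₀, map_add,
      map_one, Complex.conj_I, sub_eq_add_neg, neg_smul]
  -- even/odd relations with V
  have hVFp : V * Fp = Fp * V := by
    rw [hFp]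
    simp only [mul_smul_comm, smul_mul_assoc, mul_add, add_mul, mul_assoc, hVV]
    rw [hV2]
    simp [add_comm]
  have hVFm : V * Fm = -(Fm * V) := by
    rw [hFm]
    simp only [mul_smul_comm, smul_mul_assoc, mul_sub, sub_mul, mul_assoc, hVV]
    rw [hV2]
    simp only [mul_one, one_mul]
    module
  have hVGm : V * Gm = -(Gm * V) := by
    rw [hGm]
    simp only [mul_smul_comm, smul_mul_assoc, mul_sub, sub_mul, mul_assoc, hVV]
    rw [hV2]
    simp only [mul_one, one_mul]
    module
  have hFsum : Fp + Fm = F := by rw [hFp, hFm]; module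
  have hGt : Z * G * star Z = Gp + Complex.I • (V * Gm) := by
    rw [hZst, hZ, hGp, hGm]
    simp only [smul_mul_assoc, mul_smul_comm, add_mul, mul_add, mul_sub, sub_mul,
      mul_one, one_mul, smul_smul, smul_add, smul_sub, mul_assoc, hVV]
    match_scalars <;> field_simp <;> ring_nf <;> simp [Complex.I_sq] <;> ring
  rw [hGt, ← hFsum]
  have e1 : Fp * (V * Gm) = V * (Gm * Fp) := by
    rw [← mul_assoc, ← hVFp, mul_assoc, hpm]
  have e2 : Fm * (V * Gm) = V * (Gm * Fm) := by
    rw [← mul_assoc]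
    have : Fm * V = -(V * Fm) := by rw [hVFm, neg_neg]
    rw [this, neg_mul, mul_assoc, hmm, mul_neg, neg_neg]
  calc (Fp + Fm) * (Gp + Complex.I • (V * Gm))
      = Fp * Gp + Fm * Gp + Complex.I • (Fp * (V * Gm)) + Complex.I • (Fm * (V * Gm)) := by
        simp only [add_mul, mul_add, mul_smul_comm, smul_add]; abel
    _ = Gp * Fp + Gp * Fm + Complex.I • (V * (Gm * Fp)) + Complex.I • (V * (Gm * Fm)) := by
        rw [hpp, hmp, e1, e2]
    _ = (Gp + Complex.I • (V * Gm)) * (Fp + Fm) := by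
        simp only [add_mul, mul_add, smul_mul_assoc, mul_assoc]; abel
end

section
/- Let G be a finite group acting on a unital star ring A by star-ring automorphisms α : G → Aut(A), let β : A → A be a unital star-ring homomorphism, and let V : G → A satisfy V_g* V_h = δ_{g,h}·1, Σ_{g∈G} V_g V_g* = 1, and α_h(V_g) = V_{hg} for all g, h ∈ G. Define β̄(a) := Σ_{g∈G} V_g · (α_g ∘ β ∘ α_{g⁻¹})(a) · V_g*. Then β̄ is a unital star-ring homomorphism of A satisfying α_h ∘ β̄ = β̄ ∘ α_h for every h ∈ G; in particular β̄ maps the fixed-point subring A^G = {a ∈ A : α_g(a) = a for all g} into itself. (This is the averaging construction β̄ = Σ_g V_g β_g(·) V_g* in the proof of Proposition 3.9 of the paper, which commutes with the gauge group action and restricts to an endomorphism of the observables.) -/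
/-- The averaging construction `β̄ = ∑_g V_g β_g(·) V_g*` over a `G`-covariant Cuntz-type
multiplet: it is a unital star-ring homomorphism of `A` commuting with the action of the
finite group `G`, and in particular it maps the fixed-point subring into itself. -/
theorem averaged_endomorphism {A : Type*} [Ring A] [StarRing A]
    {G : Type*} [Group G] [Fintype G] [DecidableEq G]
    (α : G →* RingAut A)
    (hαstar : ∀ (g : G) (a : A), α g (star a) = star (α g a))
    (β : A →+* A) (hβstar : ∀ a : A, β (star a) = star (β a))
    (V : G → A)
    (hV1 : ∀ g h, star (V g) * V h = if g = h then 1 else 0)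
    (hV2 : ∑ g, V g * star (V g) = 1)
    (hVcov : ∀ g h : G, α h (V g) = V (h * g))
    (βbar : A → A)
    (hβbar : βbar = fun a => ∑ g, V g * (α g (β (α g⁻¹ a))) * star (V g)) :
    βbar 1 = 1 ∧
    (∀ x y : A, βbar (x + y) = βbar x + βbar y) ∧
    (∀ x y : A, βbar (x * y) = βbar x * βbar y) ∧
    (∀ x : A, βbar (star x) = star (βbar x)) ∧
    (∀ (h : G) (a : A), α h (βbar a) = βbar (α h a)) ∧
    (∀ a : A, (∀ g : G, α g a = a) → ∀ g : G, α g (βbar a) = βbar a) := by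
  subst hβbar
  have hcomp : ∀ (g h : G) (a : A), α g (α h a) = α (g * h) a := by
    intro g h a
    rw [map_mul]; rfl
  have helper : ∀ (a b : A) (g h : G),
      (V g * a * star (V g)) * (V h * b * star (V h))
        = if g = h then V g * (a * b) * star (V g) else 0 := by
    intro a b g h
    have h1 := hV1 g h
    by_cases hgh : g = h
    · subst hgh
      simp only [if_pos rfl] at h1 ⊢
      rw [show (V g * a * star (V g)) * (V g * b * star (V g))
          = V g * a * (star (V g) * V g) * (b * star (V g)) by noncomm_ring, h1]
      simp [mul_assoc]
    · simp only [if_neg hgh] at h1 ⊢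
      rw [show (V g * a * star (V g)) * (V h * b * star (V h))
          = V g * a * (star (V g) * V h) * (b * star (V h)) by noncomm_ring, h1]
      simp
  have hcov : ∀ (h : G) (a : A),
      α h (∑ g, V g * α g (β (α g⁻¹ a)) * star (V g))
        = ∑ g, V g * α g (β (α g⁻¹ (α h a))) * star (V g) := by
    intro h a
    rw [map_sum]
    rw [← Equiv.sum_comp (Equiv.mulLeft h)
      (fun g => V g * α g (β (α g⁻¹ (α h a))) * star (V g))]
    refine Finset.sum_congr rfl fun g _ => ?_
    simp only [Equiv.coe_mulLeft]
    rw [map_mul, map_mul, hVcov, hαstar, hVcov, hcomp, hcomp]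
    congr 2
    rw [mul_inv_rev, mul_assoc, inv_mul_cancel, mul_one]
  refine ⟨?_, ?_, ?_, ?_, hcov, ?_⟩
  · simp only [map_one, mul_one]
    exact hV2
  · intro x y
    simp [map_add, mul_add, add_mul, Finset.sum_add_distrib]
  · intro x y
    rw [Finset.sum_mul_sum]
    simp only [helper]
    rw [Finset.sum_comm]
    simp [map_mul, mul_assoc]
  · intro x
    show (∑ g, V g * α g (β (α g⁻¹ (star x))) * star (V g))
      = star (∑ g, V g * α g (β (α g⁻¹ x)) * star (V g))
    have hstar2 : ∀ (g : G) (a : A), (α g)⁻¹ (star a) = star ((α g)⁻¹ a) := by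
      intro g a; rw [← map_inv]; exact hαstar g⁻¹ a
    rw [star_sum]
    refine Finset.sum_congr rfl fun g _ => ?_
    simp [star_mul, mul_assoc, hαstar, hβstar, hstar2]
  · intro a ha g
    rw [hcov g a, ha g]
end
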